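/- Let X be an m × p matrix (m ≤ p) with rows of unit norm and σ_m(X) > 0, W a p × p orthogonal matrix, Ŵ a p × p matrix with ΔW = Ŵ − W, Π an m × m matrix with each row of ΠX of unit norm, U an m × p matrix, and Y = Π X W + U. Then the least-squares estimate Π̃ = Y Ŵ^T X^T (X X^T)^{−1} satisfies ||Π̃ − Π||_F ≤ σ_m(X)^{−1}( ||U||_F (1 + ||ΔW||_F) + √m ||ΔW||_F ). -/

import Mathlib

open Matrix

/-- Euclidean norm of a vector in `ℝ^k` given as a function. -/
noncomputable def vecNorm {k : ℕ} (v : Fin k → ℝ) : ℝ := Real.sqrt (∑ i, v i ^ 2)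

/-- Frobenius norm of a real matrix. -/
noncomputable def frobNorm {a b : ℕ} (M : Matrix (Fin a) (Fin b) ℝ) : ℝ :=
  Real.sqrt (∑ i, ∑ j, M i j ^ 2)

/-- The smallest singular value `σ_m(X)` of an `m × p` real matrix: the square
root of the smallest eigenvalue of `X Xᵀ`. -/
noncomputable def sigmaMin {m p : ℕ} (X : Matrix (Fin m) (Fin p) ℝ) : ℝ :=
  Real.sqrt (⨅ i, (Matrix.isHermitian_mul_conjTranspose_self X).eigenvalues i)

/-!
Substituting `Y = P X W + U` and `Ŵ = W + ΔW`, the orthogonality `W Wᵀ = 1` and the right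
inverse `R = Xᵀ (X Xᵀ)⁻¹` of `X` cancel the signal: `P̃ - P = (P X W ΔWᵀ + U Wᵀ + U ΔWᵀ) R`.
Right multiplication by `R` costs at most a factor `σ_m(X)⁻¹` in Frobenius norm: each row `u`
of `E R` satisfies `σ_m(X) ‖u‖ ≤ ‖uᵀ X‖` (Rayleigh quotient of `X Xᵀ`), and `R X` is the
orthogonal projection onto the row space of `X`, so `‖E R X‖_F ≤ ‖E‖_F`. The three error terms
are then bounded by the triangle inequality, submultiplicativity, orthogonal invariance and
`‖P X‖_F = √m`.
-/

theorem Matrix.IsHermitian.iInf_eigenvalues_mul_dotProduct_self_le {n : Type*} [Fintype n]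
    [DecidableEq n] {A : Matrix n n ℝ} (hA : A.IsHermitian) (u : n → ℝ) :
    (⨅ i, hA.eigenvalues i) * (u ⬝ᵥ u) ≤ u ⬝ᵥ (A *ᵥ u) := by
  set V : Matrix n n ℝ := (hA.eigenvectorUnitary : Matrix n n ℝ)
  have hVV : V * Vᵀ = 1 := by
    have := mem_unitaryGroup_iff.mp hA.eigenvectorUnitary.2
    rwa [star_eq_conjTranspose, conjTranspose_eq_transpose_of_trivial] at this
  set c := Vᵀ *ᵥ u
  have hnorm : u ⬝ᵥ u = c ⬝ᵥ c := by
    rw [dotProduct_mulVec, ← mulVec_transpose, transpose_transpose, mulVec_mulVec, hVV,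
      one_mulVec]
  have hquad : u ⬝ᵥ (A *ᵥ u) = ∑ i, hA.eigenvalues i * c i ^ 2 := by
    conv_lhs => rw [hA.spectral_theorem, Unitary.conjStarAlgAut_apply]
    rw [star_eq_conjTranspose, conjTranspose_eq_transpose_of_trivial, ← mulVec_mulVec,
      ← mulVec_mulVec, dotProduct_mulVec, ← mulVec_transpose]
    simp only [dotProduct, mulVec_diagonal, Function.comp_apply, RCLike.ofReal_real_eq_id, id]
    exact Finset.sum_congr rfl fun i _ => by ring
  rw [hnorm, hquad, dotProduct, Finset.mul_sum]
  refine Finset.sum_le_sum fun i _ => ?_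
  rw [← sq]
  exact mul_le_mul_of_nonneg_right (ciInf_le (Finite.bddBelow_range _) i) (sq_nonneg _)

section Frobenius

variable {a b c : ℕ}

attribute [local instance] Matrix.frobeniusNormedAddCommGroup

theorem frobNorm_eq_norm (M : Matrix (Fin a) (Fin b) ℝ) : frobNorm M = ‖M‖ := by
  rw [frobenius_norm_def, frobNorm, Real.sqrt_eq_rpow]
  simp only [Real.norm_eq_abs, Real.rpow_two, sq_abs]

theorem frobNorm_nonneg (M : Matrix (Fin a) (Fin b) ℝ) : 0 ≤ frobNorm M :=
  Real.sqrt_nonneg _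

theorem frobNorm_add_le (A B : Matrix (Fin a) (Fin b) ℝ) :
    frobNorm (A + B) ≤ frobNorm A + frobNorm B := by
  simpa only [frobNorm_eq_norm] using norm_add_le A B

theorem frobNorm_mul_le (A : Matrix (Fin a) (Fin b) ℝ) (B : Matrix (Fin b) (Fin c) ℝ) :
    frobNorm (A * B) ≤ frobNorm A * frobNorm B := by
  simpa only [frobNorm_eq_norm] using frobenius_norm_mul A B

theorem frobNorm_transpose (M : Matrix (Fin a) (Fin b) ℝ) : frobNorm Mᵀ = frobNorm M := by
  simpa only [frobNorm_eq_norm] using frobenius_norm_transpose M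

theorem frobNorm_sq (M : Matrix (Fin a) (Fin b) ℝ) : frobNorm M ^ 2 = ∑ i, M i ⬝ᵥ M i := by
  rw [frobNorm, Real.sq_sqrt (by positivity)]
  simp only [dotProduct, sq]

theorem frobNorm_sq_eq_trace (M : Matrix (Fin a) (Fin b) ℝ) :
    frobNorm M ^ 2 = trace (M * Mᵀ) := by
  simp only [frobNorm_sq, trace, diag, mul_apply, transpose_apply, dotProduct]

theorem frobNorm_mul_of_mul_transpose_eq_one (A : Matrix (Fin a) (Fin b) ℝ)
    {B : Matrix (Fin b) (Fin b) ℝ} (hB : B * Bᵀ = 1) : frobNorm (A * B) = frobNorm A := by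
  have hsq : frobNorm (A * B) ^ 2 = frobNorm A ^ 2 := by
    rw [frobNorm_sq_eq_trace, frobNorm_sq_eq_trace, transpose_mul, Matrix.mul_assoc,
      ← Matrix.mul_assoc B, hB, Matrix.one_mul]
  exact (pow_left_inj₀ (frobNorm_nonneg _) (frobNorm_nonneg _) two_ne_zero).mp hsq

theorem frobNorm_eq_sqrt_of_forall_vecNorm_eq_one {A : Matrix (Fin a) (Fin b) ℝ}
    (h : ∀ i, vecNorm (A i) = 1) : frobNorm A = Real.sqrt a := by
  have hrow : ∀ i, ∑ j, A i j ^ 2 = 1 := fun i => Real.sqrt_eq_one.mp (h i)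
  simp [frobNorm, hrow]

theorem frobNorm_mul_le_of_isProjection (E : Matrix (Fin a) (Fin b) ℝ)
    {Q : Matrix (Fin b) (Fin b) ℝ} (hsymm : Qᵀ = Q) (hidem : Q * Q = Q) :
    frobNorm (E * Q) ≤ frobNorm E := by
  have hpyth : E * Eᵀ = (E * Q) * (E * Q)ᵀ + (E - E * Q) * (E - E * Q)ᵀ := by
    simp only [transpose_mul, transpose_sub, hsymm, Matrix.mul_sub, Matrix.sub_mul,
      Matrix.mul_assoc, ← Matrix.mul_assoc Q Q, hidem]
    abel
  have hsq : frobNorm (E * Q) ^ 2 ≤ frobNorm E ^ 2 := by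
    rw [frobNorm_sq_eq_trace E, hpyth, trace_add, ← frobNorm_sq_eq_trace,
      ← frobNorm_sq_eq_trace]
    exact le_add_of_nonneg_right (sq_nonneg _)
  exact (pow_le_pow_iff_left₀ (frobNorm_nonneg _) (frobNorm_nonneg _) two_ne_zero).mp hsq

end Frobenius

section SmallestSingularValue

variable {k m p : ℕ} (X : Matrix (Fin m) (Fin p) ℝ)

theorem sigmaMin_sq :
    sigmaMin X ^ 2 = ⨅ i, (isHermitian_mul_conjTranspose_self X).eigenvalues i :=
  Real.sq_sqrt (Real.iInf_nonneg (eigenvalues_self_mul_conjTranspose_nonneg X))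

theorem sigmaMin_sq_mul_dotProduct_self_le (u : Fin m → ℝ) :
    sigmaMin X ^ 2 * (u ⬝ᵥ u) ≤ (u ᵥ* X) ⬝ᵥ (u ᵥ* X) := by
  have h := (isHermitian_mul_conjTranspose_self X).iInf_eigenvalues_mul_dotProduct_self_le u
  rwa [← sigmaMin_sq, conjTranspose_eq_transpose_of_trivial, ← mulVec_mulVec,
    dotProduct_mulVec, mulVec_transpose] at h

theorem sigmaMin_mul_frobNorm_le (N : Matrix (Fin k) (Fin m) ℝ) :
    sigmaMin X * frobNorm N ≤ frobNorm (N * X) := by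
  have hsq : (sigmaMin X * frobNorm N) ^ 2 ≤ frobNorm (N * X) ^ 2 := by
    rw [mul_pow, frobNorm_sq, frobNorm_sq, Finset.mul_sum]
    exact Finset.sum_le_sum fun i _ => sigmaMin_sq_mul_dotProduct_self_le X (N i)
  exact (pow_le_pow_iff_left₀ (mul_nonneg (Real.sqrt_nonneg _) (frobNorm_nonneg _))
    (frobNorm_nonneg _) two_ne_zero).mp hsq

variable {X}

theorem posDef_mul_transpose_of_sigmaMin_pos (hσ : 0 < sigmaMin X) : (X * Xᵀ).PosDef := by
  refine posDef_iff_dotProduct_mulVec.mpr ⟨?_, fun u hu => ?_⟩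
  · simpa only [conjTranspose_eq_transpose_of_trivial] using isHermitian_mul_conjTranspose_self X
  · have hu' : 0 < u ⬝ᵥ u := by simpa using dotProduct_star_self_pos_iff.mpr hu
    rw [star_trivial, ← mulVec_mulVec, dotProduct_mulVec, mulVec_transpose]
    exact (mul_pos (pow_pos hσ 2) hu').trans_le (sigmaMin_sq_mul_dotProduct_self_le X u)

theorem mul_transpose_mul_inv_eq_one (hσ : 0 < sigmaMin X) :
    X * (Xᵀ * (X * Xᵀ)⁻¹) = 1 := by
  rw [← Matrix.mul_assoc, mul_nonsing_inv _
    ((isUnit_iff_isUnit_det _).mp (posDef_mul_transpose_of_sigmaMin_pos hσ).isUnit)]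

theorem frobNorm_mul_rightInverse_le (hσ : 0 < sigmaMin X) (E : Matrix (Fin k) (Fin p) ℝ) :
    frobNorm (E * (Xᵀ * (X * Xᵀ)⁻¹)) ≤ (sigmaMin X)⁻¹ * frobNorm E := by
  set Q := Xᵀ * (X * Xᵀ)⁻¹ * X
  have hXXt : (X * Xᵀ)ᵀ = X * Xᵀ := by rw [transpose_mul, transpose_transpose]
  have hsymm : Qᵀ = Q := by
    simp only [Q, transpose_mul, transpose_nonsing_inv, hXXt, transpose_transpose,
      Matrix.mul_assoc]
  have hidem : Q * Q = Q := by
    rw [Matrix.mul_assoc, ← Matrix.mul_assoc X, mul_transpose_mul_inv_eq_one hσ, Matrix.one_mul]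
  rw [le_inv_mul_iff₀ hσ]
  calc sigmaMin X * frobNorm (E * (Xᵀ * (X * Xᵀ)⁻¹))
      ≤ frobNorm (E * (Xᵀ * (X * Xᵀ)⁻¹) * X) := sigmaMin_mul_frobNorm_le X _
    _ = frobNorm (E * Q) := by simp only [Q, Matrix.mul_assoc]
    _ ≤ frobNorm E := frobNorm_mul_le_of_isProjection E hsymm hidem

end SmallestSingularValue

theorem OLS_mapping_error_bound_general {m p : ℕ}
    (X : Matrix (Fin m) (Fin p) ℝ)
    (hσ : 0 < sigmaMin X)
    (W What : Matrix (Fin p) (Fin p) ℝ) (hW : W * Wᵀ = 1)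
    (ΔW : Matrix (Fin p) (Fin p) ℝ) (hΔW : ΔW = What - W)
    (P : Matrix (Fin m) (Fin m) ℝ) (hPX : ∀ i, vecNorm ((P * X) i) = 1)
    (U : Matrix (Fin m) (Fin p) ℝ)
    (Y : Matrix (Fin m) (Fin p) ℝ) (hY : Y = P * X * W + U)
    (Ptilde : Matrix (Fin m) (Fin m) ℝ)
    (hPtilde : Ptilde = Y * Whatᵀ * Xᵀ * (X * Xᵀ)⁻¹) :
    frobNorm (Ptilde - P) ≤
      (sigmaMin X)⁻¹ *
        (frobNorm U * (1 + frobNorm ΔW) + Real.sqrt m * frobNorm ΔW) := by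
  obtain rfl : What = W + ΔW := by rw [hΔW, add_sub_cancel]
  subst hY hPtilde
  have hWt : Wᵀ * Wᵀᵀ = 1 := by rw [transpose_transpose, mul_eq_one_comm.mp hW]
  have herror : (P * X * W + U) * (W + ΔW)ᵀ * Xᵀ * (X * Xᵀ)⁻¹ - P
      = (P * X * W * ΔWᵀ + U * Wᵀ + U * ΔWᵀ) * (Xᵀ * (X * Xᵀ)⁻¹) := by
    have hWWt (M : Matrix (Fin p) (Fin m) ℝ) : W * (Wᵀ * M) = M := by
      rw [← Matrix.mul_assoc, hW, Matrix.one_mul]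
    simp only [transpose_add, Matrix.add_mul, Matrix.mul_add, Matrix.mul_assoc, hWWt,
      mul_transpose_mul_inv_eq_one hσ, Matrix.mul_one]
    abel
  rw [herror]
  calc _ ≤ (sigmaMin X)⁻¹ * frobNorm (P * X * W * ΔWᵀ + U * Wᵀ + U * ΔWᵀ) :=
        frobNorm_mul_rightInverse_le hσ _
    _ ≤ (sigmaMin X)⁻¹ *
        (frobNorm (P * X * W) * frobNorm ΔWᵀ + frobNorm (U * Wᵀ) + frobNorm U * frobNorm ΔWᵀ) := by
      grw [frobNorm_add_le, frobNorm_add_le, frobNorm_mul_le (P * X * W), frobNorm_mul_le U ΔWᵀ]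
    _ = (sigmaMin X)⁻¹ * (frobNorm U * (1 + frobNorm ΔW) + Real.sqrt m * frobNorm ΔW) := by
      rw [frobNorm_mul_of_mul_transpose_eq_one _ hW, frobNorm_mul_of_mul_transpose_eq_one _ hWt,
        frobNorm_eq_sqrt_of_forall_vecNorm_eq_one hPX, frobNorm_transpose]
      ring

/-- Error bound for the least-squares mapping estimate: with `X` an `m × p`
matrix (`m ≤ p`) having unit-norm rows and `σ_m(X) > 0`, `W` orthogonal,
`ΔW = Ŵ − W`, `P` an `m × m` matrix with unit-norm rows of `P X`, `U` an `m × p`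
residual matrix, and `Y = P X W + U`, the estimate
`P̃ = Y Ŵᵀ Xᵀ (X Xᵀ)⁻¹` satisfies
`‖P̃ − P‖_F ≤ σ_m(X)⁻¹ (‖U‖_F (1 + ‖ΔW‖_F) + √m ‖ΔW‖_F)`. -/
theorem OLS_mapping_error_bound {m p : ℕ} (hmp : m ≤ p)
    (X : Matrix (Fin m) (Fin p) ℝ) (hrows : ∀ i, vecNorm (X i) = 1)
    (hσ : 0 < sigmaMin X)
    (W What : Matrix (Fin p) (Fin p) ℝ) (hW : W * Wᵀ = 1)
    (ΔW : Matrix (Fin p) (Fin p) ℝ) (hΔW : ΔW = What - W)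
    (P : Matrix (Fin m) (Fin m) ℝ) (hPX : ∀ i, vecNorm ((P * X) i) = 1)
    (U : Matrix (Fin m) (Fin p) ℝ)
    (Y : Matrix (Fin m) (Fin p) ℝ) (hY : Y = P * X * W + U)
    (Ptilde : Matrix (Fin m) (Fin m) ℝ)
    (hPtilde : Ptilde = Y * Whatᵀ * Xᵀ * (X * Xᵀ)⁻¹) :
    frobNorm (Ptilde - P) ≤
      (sigmaMin X)⁻¹ *
        (frobNorm U * (1 + frobNorm ΔW) + Real.sqrt m * frobNorm ΔW) :=
  OLS_mapping_error_bound_general X hσ W What hW ΔW hΔW P hPX U Y hY Ptilde hPtilde
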